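/- Let n ≥ 1, let v : ℝ → ℝⁿ → ℝⁿ be bounded and twice continuously differentiable jointly in (t, x), and let X : ℝ → ℝⁿ → ℝⁿ be a flow of v that is twice continuously differentiable jointly in (t, x). Then for all t ∈ ℝ and x ∈ ℝⁿ: det(D_x X(t, x)) = exp(∫₀ᵗ (∇·v_s)(X(s, x)) ds). -/

import Mathlib

open MeasureTheory

/-- The divergence of a vector field `w` at `y`: the trace of its Fréchet derivative at `y`. -/
noncomputable def divg {n : ℕ}
    (w : EuclideanSpace ℝ (Fin n) → EuclideanSpace ℝ (Fin n))
    (y : EuclideanSpace ℝ (Fin n)) : ℝ :=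
  LinearMap.trace ℝ (EuclideanSpace ℝ (Fin n)) (fderiv ℝ w y).toLinearMap

/-!
Liouville's formula. Differentiating the flow equation in `x` (the mixed partial derivatives of
the C² map `X` commute) shows that `J t = D_x X(t, x)` solves the linearized equation
`J' = Dv_t(X(t, x)) ∘ J`. Jacobi's formula turns this into the scalar equation
`(det J)' = (∇·v_t)(X(t, x)) · det J`, whose solution with `det J 0 = det id = 1` is the
exponential of the integrated divergence.
-/

open ContinuousLinearMap Function

noncomputable def Matrix.detRowContinuousMultilinearMap (𝕜 n : Type*)
    [NontriviallyNormedField 𝕜] [Fintype n] [DecidableEq n] :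
    ContinuousMultilinearMap 𝕜 (fun _ : n => n → 𝕜) 𝕜 :=
  { (detRowAlternating : (n → 𝕜) [⋀^n]→ₗ[𝕜] 𝕜).toMultilinearMap with
    cont := continuous_id.matrix_det }

theorem Matrix.hasDerivAt_det_of_hasDerivAt_mul {𝕜 n : Type*} [NontriviallyNormedField 𝕜]
    [Fintype n] [DecidableEq n] {M : 𝕜 → Matrix n n 𝕜} {C : Matrix n n 𝕜} {t : 𝕜}
    (hM : ∀ i j, HasDerivAt (fun s => M s i j) ((C * M t) i j) t) :
    HasDerivAt (fun s => (M s).det) (C.trace * (M t).det) t := by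
  have hrows : HasDerivAt (fun s => of.symm (M s)) (of.symm (C * M t)) t :=
    hasDerivAt_pi.2 fun i => hasDerivAt_pi.2 fun j => hM i j
  have hdet :=
    ((detRowContinuousMultilinearMap 𝕜 n).hasFDerivAt (of.symm (M t))).comp_hasDerivAt t hrows
  refine hdet.congr_deriv ?_
  rw [ContinuousMultilinearMap.linearDeriv_apply, trace, Finset.sum_mul]
  refine Finset.sum_congr rfl fun i _ => ?_
  -- row `i` of `C * M` is `∑ k, C i k • M k`; only the `k = i` term survives in the determinant
  have hrow : of.symm (C * M t) i = ∑ k, C i k • M t k := by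
    ext j; simp [Matrix.mul_apply]
  rw [hrow]
  exact det_updateRow_sum (M t) i (C i)

theorem ContinuousLinearMap.hasDerivAt_det_of_hasDerivAt_comp {𝕜 E : Type*}
    [NontriviallyNormedField 𝕜] [CompleteSpace 𝕜] [NormedAddCommGroup E] [NormedSpace 𝕜 E]
    [FiniteDimensional 𝕜 E] {J : 𝕜 → E →L[𝕜] E} {A : E →L[𝕜] E} {t : 𝕜}
    (hJ : HasDerivAt J (A ∘L J t) t) :
    HasDerivAt (fun s => LinearMap.det (J s : E →ₗ[𝕜] E))
      (LinearMap.trace 𝕜 E A * LinearMap.det (J t : E →ₗ[𝕜] E)) t := by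
  let b := Module.finBasis 𝕜 E
  simp only [← LinearMap.det_toMatrix b, LinearMap.trace_eq_matrix_trace 𝕜 b]
  refine Matrix.hasDerivAt_det_of_hasDerivAt_mul fun i j => ?_
  rw [← LinearMap.toMatrix_comp]
  simp only [LinearMap.toMatrix_apply]
  exact (LinearMap.toContinuousLinearMap (b.coord i)).hasFDerivAt.comp_hasDerivAt t
    ((apply 𝕜 E (b j)).hasFDerivAt.comp_hasDerivAt t hJ)

theorem ContinuousLinearMap.continuous_trace {𝕜 E : Type*} [NontriviallyNormedField 𝕜]
    [CompleteSpace 𝕜] [NormedAddCommGroup E] [NormedSpace 𝕜 E] [FiniteDimensional 𝕜 E] :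
    Continuous fun f : E →L[𝕜] E => LinearMap.trace 𝕜 E f :=
  LinearMap.continuous_of_finiteDimensional (LinearMap.trace 𝕜 E ∘ₗ coeLM 𝕜)

theorem ContDiff.hasDerivAt_partial_fderiv {E F : Type*} [NormedAddCommGroup E]
    [NormedSpace ℝ E] [NormedAddCommGroup F] [NormedSpace ℝ F] {f : ℝ → E → F}
    (hf : ContDiff ℝ 2 (uncurry f)) (t : ℝ) (x : E) :
    HasDerivAt (fun s => fderiv ℝ (f s) x)
      (fderiv ℝ (fun y => deriv (fun s => f s y) t) x) t := by
  set D := fderiv ℝ (uncurry f)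
  have hf₁ : Differentiable ℝ (uncurry f) := hf.differentiable (by norm_num)
  have hD : Differentiable ℝ D :=
    (hf.fderiv_right (m := 1) (by norm_num)).differentiable one_ne_zero
  have hpath : ∀ s y, HasDerivAt (fun u : ℝ => (u, y)) ((1 : ℝ), (0 : E)) s :=
    fun s y => (hasDerivAt_id s).prodMk (hasDerivAt_const s y)
  have hfderiv : (fun s => fderiv ℝ (f s) x) = fun s => precomp F (inr ℝ ℝ E) (D (s, x)) :=
    funext fun s => ((hf₁ (s, x)).hasFDerivAt.comp x (hasFDerivAt_prodMk_right s x)).fderiv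
  have hderiv : (fun y => deriv (fun s => f s y) t) = fun y => D (t, y) (1, 0) :=
    funext fun y => ((hf₁ (t, y)).hasFDerivAt.comp_hasDerivAt t (hpath t y) :).deriv
  have hD_time : HasDerivAt (fun s => fderiv ℝ (f s) x)
      (fderiv ℝ D (t, x) (1, 0) ∘L inr ℝ ℝ E) t := by
    rw [hfderiv]
    exact (precomp F (inr ℝ ℝ E)).hasFDerivAt.comp_hasDerivAt t
      ((hD (t, x)).hasFDerivAt.comp_hasDerivAt t (hpath t x))
  have hD_space : HasFDerivAt (fun y => D (t, y) (1, 0))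
      (apply ℝ F ((1 : ℝ), (0 : E)) ∘L fderiv ℝ D (t, x) ∘L inr ℝ ℝ E) x :=
    (apply ℝ F ((1 : ℝ), (0 : E))).hasFDerivAt.comp x
      ((hD (t, x)).hasFDerivAt.comp x (hasFDerivAt_prodMk_right t x))
  rw [hderiv, hD_space.fderiv]
  refine hD_time.congr_deriv (ext fun h => ?_)
  exact (hf.contDiffAt.isSymmSndFDerivAt (by simp) _ _)

theorem hasDerivAt_fderiv_flow {E : Type*} [NormedAddCommGroup E] [NormedSpace ℝ E]
    {v X : ℝ → E → E} (hX : ContDiff ℝ 2 (uncurry X))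
    (hflow : ∀ t x, HasDerivAt (fun s => X s x) (v t (X t x)) t) {t : ℝ} {x : E}
    (hv : DifferentiableAt ℝ (v t) (X t x)) :
    HasDerivAt (fun s => fderiv ℝ (X s) x)
      (fderiv ℝ (v t) (X t x) ∘L fderiv ℝ (X t) x) t := by
  have hXt : DifferentiableAt ℝ (X t) x :=
    (hX.comp (contDiff_const.prodMk contDiff_id)).differentiable (by norm_num) x
  have hvelocity : (fun y => deriv (fun s => X s y) t) = fun y => v t (X t y) :=
    funext fun y => (hflow t y).deriv
  convert hX.hasDerivAt_partial_fderiv t x using 1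
  rw [hvelocity]
  exact (hv.hasFDerivAt.comp x hXt.hasFDerivAt).fderiv.symm

theorem eq_mul_exp_integral_of_hasDerivAt {τ f : ℝ → ℝ} (hτ : Continuous τ)
    (hf : ∀ t, HasDerivAt f (τ t * f t) t) (t : ℝ) :
    f t = f 0 * Real.exp (∫ s in (0 : ℝ)..t, τ s) := by
  set I := fun t => ∫ s in (0 : ℝ)..t, τ s
  have hg : ∀ s, HasDerivAt (fun s => f s * Real.exp (-I s)) 0 s := fun s =>
    ((hf s).mul (hτ.integral_hasStrictDerivAt 0 s).hasDerivAt.neg.exp).congr_deriv (by ring)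
  have hconst := is_const_of_deriv_eq_zero (fun s => (hg s).differentiableAt)
    (fun s => (hg s).deriv) t 0
  simp only [I, intervalIntegral.integral_same, neg_zero, Real.exp_zero, mul_one,
    Real.exp_neg] at hconst
  rw [← hconst]
  field_simp

theorem det_fderiv_flow_eq_exp_integral_div_general
    (n : ℕ)
    (v X : ℝ → EuclideanSpace ℝ (Fin n) → EuclideanSpace ℝ (Fin n))
    (hv_smooth : ContDiff ℝ 2 (fun q : ℝ × EuclideanSpace ℝ (Fin n) => v q.1 q.2))
    (hX_smooth : ContDiff ℝ 2 (fun q : ℝ × EuclideanSpace ℝ (Fin n) => X q.1 q.2))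
    (hX0 : ∀ x, X 0 x = x)
    (hflow : ∀ t x, HasDerivAt (fun s => X s x) (v t (X t x)) t) :
    ∀ (t : ℝ) (x : EuclideanSpace ℝ (Fin n)),
      LinearMap.det (fderiv ℝ (X t) x).toLinearMap =
        Real.exp (∫ s in (0:ℝ)..t, divg (v s) (X s x)) := by
  intro t x
  have hv : ∀ s y, DifferentiableAt ℝ (v s) y := fun s y =>
    (hv_smooth.comp (contDiff_const.prodMk contDiff_id)).differentiable (by norm_num) y
  have hdet : ∀ s, HasDerivAt (fun s => LinearMap.det (fderiv ℝ (X s) x).toLinearMap)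
      (divg (v s) (X s x) * LinearMap.det (fderiv ℝ (X s) x).toLinearMap) s := fun s =>
    hasDerivAt_det_of_hasDerivAt_comp (hasDerivAt_fderiv_flow hX_smooth hflow (hv s (X s x)))
  have htraj : ContDiff ℝ 0 fun s => X s x :=
    (hX_smooth.comp (contDiff_id.prodMk contDiff_const)).of_le (by norm_num)
  have hdiv : Continuous fun s => divg (v s) (X s x) :=
    continuous_trace.comp (hv_smooth.fderiv htraj (by norm_num)).continuous
  have hdet₀ : LinearMap.det (fderiv ℝ (X 0) x).toLinearMap = 1 := by
    simp [show X 0 = id from funext hX0]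
  rw [eq_mul_exp_integral_of_hasDerivAt hdiv hdet t, hdet₀, one_mul]

theorem det_fderiv_flow_eq_exp_integral_div
    (n : ℕ) (hn : 1 ≤ n)
    (v X : ℝ → EuclideanSpace ℝ (Fin n) → EuclideanSpace ℝ (Fin n))
    (hv_bdd : ∃ C : ℝ, ∀ t x, ‖v t x‖ ≤ C)
    (hv_smooth : ContDiff ℝ 2 (fun q : ℝ × EuclideanSpace ℝ (Fin n) => v q.1 q.2))
    (hX_smooth : ContDiff ℝ 2 (fun q : ℝ × EuclideanSpace ℝ (Fin n) => X q.1 q.2))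
    (hX0 : ∀ x, X 0 x = x)
    (hflow : ∀ t x, HasDerivAt (fun s => X s x) (v t (X t x)) t) :
    ∀ (t : ℝ) (x : EuclideanSpace ℝ (Fin n)),
      LinearMap.det (fderiv ℝ (X t) x).toLinearMap =
        Real.exp (∫ s in (0:ℝ)..t, divg (v s) (X s x)) :=
  det_fderiv_flow_eq_exp_integral_div_general n v X hv_smooth hX_smooth hX0 hflow
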